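/- arXiv:1703.10689 — 6 statements merged into one kernel-verified Lean document; each statement's English description precedes it below -/
import Mathlib

section
/- Let x ∈ ℝ^m satisfy x_j ≥ 0, ∑_j x_j = 1, and ∑_j p_j x_j = 1, where p ∈ ℝ^m is a price vector with p_j ≥ 0. Then x can be written as a nonnegative combination of 'bundles': there exist nonnegative weights y_b summing to 1, where each bundle b is either a single item j with p_j = 1, or a pair (j,k) with p_j < 1 < p_k mixed with the unique ratio α_b satisfying α_b p_j + (1−α_b) p_k = 1, such that x_j = ∑ over bundles containing j of (the fraction of item j in that bundle) times y_b. -/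
/-- An allocation giving exactly one unit of items at total cost exactly 1 can be written
as a nonnegative combination of bundles: singleton bundles of items with price exactly 1,
and two-item bundles `(j,k)` with `p j < 1 < p k` mixed with the unique ratio
`α = (p k − 1)/(p k − p j)` making the bundle price exactly 1. -/
theorem stmt_2 (m : ℕ) (p x : Fin m → ℝ)
    (hp : ∀ j, 0 ≤ p j) (hx : ∀ j, 0 ≤ x j)
    (hsum : ∑ j, x j = 1) (hcost : ∑ j, p j * x j = 1) :
    ∃ (ys : Fin m → ℝ) (yp : Fin m → Fin m → ℝ),
      (∀ j, 0 ≤ ys j) ∧ (∀ j k, 0 ≤ yp j k) ∧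
      -- singleton bundles only for items of price exactly 1
      (∀ j, ys j ≠ 0 → p j = 1) ∧
      -- two-item bundles only for pairs with p j < 1 < p k
      (∀ j k, yp j k ≠ 0 → p j < 1 ∧ 1 < p k) ∧
      -- total bundle weight is 1
      (∑ j, ys j) + (∑ j, ∑ k, yp j k) = 1 ∧
      -- the allocation is recovered from the bundles
      (∀ j, x j = ys j
          + ∑ k, ((p k - 1) / (p k - p j)) * yp j k
          + ∑ k, (1 - (p j - 1) / (p j - p k)) * yp k j) := by
  classical
  set A : ℝ := ∑ j, if p j < 1 then x j * (1 - p j) else 0 with hAdef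
  set B : ℝ := ∑ k, if 1 < p k then x k * (p k - 1) else 0 with hBdef
  have hAB : A = B := by
    have h0 : ∑ j, (x j * (1 - p j)) = 0 := by
      have h : ∑ j, x j * (1 - p j) = (∑ j, x j) - ∑ j, p j * x j := by
        rw [← Finset.sum_sub_distrib]
        exact Finset.sum_congr rfl (fun j _ => by ring)
      rw [h, hsum, hcost]; ring
    have h1 : A - B = ∑ j, x j * (1 - p j) := by
      rw [hAdef, hBdef, ← Finset.sum_sub_distrib]
      refine Finset.sum_congr rfl fun j _ => ?_
      rcases lt_trichotomy (p j) 1 with h | h | h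
      · rw [if_pos h, if_neg (by linarith)]; ring
      · rw [if_neg (by linarith), if_neg (by linarith), h]; ring
      · rw [if_neg (by linarith), if_pos h]; ring
    rw [h0] at h1
    linarith
  have hA0 : 0 ≤ A := by
    refine Finset.sum_nonneg fun j _ => ?_
    split
    · next h => exact mul_nonneg (hx j) (by linarith)
    · exact le_refl _
  rcases eq_or_lt_of_le hA0 with hA | hA
  · -- A = 0 : all mass is on price-1 items
    have hlow : ∀ j, p j < 1 → x j = 0 := by
      intro j hj
      have := (Finset.sum_eq_zero_iff_of_nonneg (fun i _ => by
        split
        · next h => exact mul_nonneg (hx i) (by linarith)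
        · exact le_refl (0:ℝ))).1 hA.symm j (Finset.mem_univ j)
      rw [if_pos hj] at this
      have h1 : (0:ℝ) < 1 - p j := by linarith
      nlinarith [hx j]
    have hhigh : ∀ j, 1 < p j → x j = 0 := by
      intro j hj
      have hB0 : B = 0 := by rw [← hAB, ← hA]
      have := (Finset.sum_eq_zero_iff_of_nonneg (fun i _ => by
        split
        · next h => exact mul_nonneg (hx i) (by linarith)
        · exact le_refl (0:ℝ))).1 hB0 j (Finset.mem_univ j)
      rw [if_pos hj] at this
      nlinarith [hx j]
    refine ⟨x, fun _ _ => 0, hx, fun _ _ => le_refl _, ?_, ?_, ?_, ?_⟩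
    · intro j hj
      rcases lt_trichotomy (p j) 1 with h | h | h
      · exact absurd (hlow j h) hj
      · exact h
      · exact absurd (hhigh j h) hj
    · intro j k h; exact absurd rfl h
    · simp [hsum]
    · intro j; simp
  · -- A > 0
    have hAne : A ≠ 0 := ne_of_gt hA
    set ys : Fin m → ℝ := fun j => if p j = 1 then x j else 0 with hys
    set yp : Fin m → Fin m → ℝ :=
      fun j k => if p j < 1 ∧ 1 < p k then x j * x k * (p k - p j) / A else 0 with hyp
    have hysn : ∀ j, 0 ≤ ys j := by
      intro j; rw [hys]; dsimp only
      split
      · exact hx j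
      · exact le_refl _
    have hypn : ∀ j k, 0 ≤ yp j k := by
      intro j k; rw [hyp]; dsimp only
      split
      · next h =>
        apply div_nonneg _ (le_of_lt hA)
        exact mul_nonneg (mul_nonneg (hx j) (hx k)) (by linarith [h.1, h.2])
      · exact le_refl _
    have hrec : ∀ j, x j = ys j
          + ∑ k, ((p k - 1) / (p k - p j)) * yp j k
          + ∑ k, (1 - (p j - 1) / (p j - p k)) * yp k j := by
      intro j
      rcases lt_trichotomy (p j) 1 with hj | hj | hj
      · -- low item
        have hys0 : ys j = 0 := by rw [hys]; exact if_neg (ne_of_lt hj)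
        have h3 : ∑ k, (1 - (p j - 1) / (p j - p k)) * yp k j = 0 := by
          apply Finset.sum_eq_zero
          intro k _
          have : yp k j = 0 := by
            rw [hyp]; exact if_neg (fun h => absurd h.2 (not_lt.2 (le_of_lt hj)))
          rw [this, mul_zero]
        have h2 : ∑ k, ((p k - 1) / (p k - p j)) * yp j k
            = ∑ k, (x j / A) * (if 1 < p k then x k * (p k - 1) else 0) := by
          refine Finset.sum_congr rfl fun k _ => ?_
          rw [hyp]; dsimp only
          by_cases hk : 1 < p k
          · rw [if_pos ⟨hj, hk⟩, if_pos hk]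
            have hne : p k - p j ≠ 0 := by intro h; nlinarith
            field_simp
          · rw [if_neg (fun h => hk h.2), if_neg hk, mul_zero, mul_zero]
        rw [hys0, h2, h3, ← Finset.mul_sum, ← hBdef, ← hAB, div_mul_cancel₀ _ hAne]
        ring
      · -- price exactly 1
        have hys1 : ys j = x j := by rw [hys]; exact if_pos hj
        have h2 : ∑ k, ((p k - 1) / (p k - p j)) * yp j k = 0 := by
          apply Finset.sum_eq_zero
          intro k _
          have : yp j k = 0 := by
            rw [hyp]; exact if_neg (fun h => absurd h.1 (by rw [hj]; exact lt_irrefl 1))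
          rw [this, mul_zero]
        have h3 : ∑ k, (1 - (p j - 1) / (p j - p k)) * yp k j = 0 := by
          apply Finset.sum_eq_zero
          intro k _
          have : yp k j = 0 := by
            rw [hyp]; exact if_neg (fun h => absurd h.2 (by rw [hj]; exact lt_irrefl 1))
          rw [this, mul_zero]
        rw [hys1, h2, h3]; ring
      · -- high item
        have hys0 : ys j = 0 := by rw [hys]; exact if_neg (ne_of_gt hj)
        have h2 : ∑ k, ((p k - 1) / (p k - p j)) * yp j k = 0 := by
          apply Finset.sum_eq_zero
          intro k _
          have : yp j k = 0 := by
            rw [hyp]; exact if_neg (fun h => absurd h.1 (not_lt.2 (le_of_lt hj)))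
          rw [this, mul_zero]
        have h3 : ∑ k, (1 - (p j - 1) / (p j - p k)) * yp k j
            = ∑ k, (x j / A) * (if p k < 1 then x k * (1 - p k) else 0) := by
          refine Finset.sum_congr rfl fun k _ => ?_
          rw [hyp]; dsimp only
          by_cases hk : p k < 1
          · rw [if_pos ⟨hk, hj⟩, if_pos hk]
            have hne : p j - p k ≠ 0 := by intro h; nlinarith
            field_simp
            ring
          · rw [if_neg (fun h => hk h.1), if_neg hk, mul_zero, mul_zero]
        rw [hys0, h2, h3, ← Finset.mul_sum, ← hAdef, div_mul_cancel₀ _ hAne]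
        ring
    refine ⟨ys, yp, hysn, hypn, ?_, ?_, ?_, hrec⟩
    · intro j hj
      by_contra h
      exact hj (by rw [hys]; exact if_neg h)
    · intro j k hjk
      by_contra h
      exact hjk (by rw [hyp]; exact if_neg h)
    · -- total weight, derived from the recovery identity
      have e1 : (1:ℝ) = ∑ j, (ys j + (∑ k, ((p k - 1) / (p k - p j)) * yp j k)
          + ∑ k, (1 - (p j - 1) / (p j - p k)) * yp k j) := by
        have := Finset.sum_congr rfl fun j (_ : j ∈ Finset.univ) => hrec j
        rw [hsum] at this
        exact this
      rw [Finset.sum_add_distrib, Finset.sum_add_distrib] at e1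
      have e2 : ∑ j, ∑ k, (1 - (p j - 1) / (p j - p k)) * yp k j
          = ∑ j, ∑ k, (1 - (p k - 1) / (p k - p j)) * yp j k := Finset.sum_comm
      rw [e2] at e1
      have e3 : (∑ j, ∑ k, ((p k - 1) / (p k - p j)) * yp j k)
          + (∑ j, ∑ k, (1 - (p k - 1) / (p k - p j)) * yp j k) = ∑ j, ∑ k, yp j k := by
        rw [← Finset.sum_add_distrib]
        refine Finset.sum_congr rfl fun j _ => ?_
        rw [← Finset.sum_add_distrib]
        exact Finset.sum_congr rfl fun k _ => by ring
      linarith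
end

section
/- Suppose an agent has values v ∈ ℝ^m, prices are p ∈ ℝ^m, and x is an optimal solution to: maximize ∑_j v_j x_j subject to ∑_j x_j = 1, ∑_j p_j x_j ≤ 1, x ≥ 0. If x is decomposed into bundles (each of unit price 1), then every bundle b used with positive weight has value v_b = max over all valid bundles b' of v_{b'}, where v_b for bundle (j,k) with mix α is α·v_j + (1−α)·v_k, and v_b = v_j for singleton bundle (j). Consequently the agent's optimal utility equals the common value v_b of the bundles used. -/
/-- If `x` is optimal for the agent's matching-market LP and is decomposed into bundles
(singletons of price 1, or pairs `(j,k)` with `p j < 1 < p k` mixed at the price-1 ratio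
`α = (p k − 1)/(p k − p j)`), then every bundle used with positive weight has value equal
to the agent's optimal utility `u = ∑ j, v j * x j`, and every valid bundle has value at
most `u`; i.e., bundles used with positive weight attain the maximum value over all valid
bundles, and the optimal utility equals this common value. -/
theorem stmt_3 (m : ℕ) (p v x : Fin m → ℝ)
    (hp : ∀ j, 0 ≤ p j)
    -- feasibility of x
    (hx : ∀ j, 0 ≤ x j) (hsum : ∑ j, x j = 1) (hbudget : ∑ j, p j * x j ≤ 1)
    -- optimality of x
    (hopt : ∀ x' : Fin m → ℝ, (∀ j, 0 ≤ x' j) → (∑ j, x' j = 1) →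
        (∑ j, p j * x' j ≤ 1) → ∑ j, v j * x' j ≤ ∑ j, v j * x j)
    -- a bundle decomposition of x
    (ys : Fin m → ℝ) (yp : Fin m → Fin m → ℝ)
    (hys : ∀ j, 0 ≤ ys j) (hyp : ∀ j k, 0 ≤ yp j k)
    (hss : ∀ j, ys j ≠ 0 → p j = 1)
    (hps : ∀ j k, yp j k ≠ 0 → p j < 1 ∧ 1 < p k)
    (hw : (∑ j, ys j) + (∑ j, ∑ k, yp j k) = 1)
    (hdec : ∀ j, x j = ys j
        + ∑ k, ((p k - 1) / (p k - p j)) * yp j k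
        + ∑ k, (1 - (p j - 1) / (p j - p k)) * yp k j) :
    -- every used singleton bundle has value equal to the optimal utility
    (∀ j, 0 < ys j → v j = ∑ i, v i * x i) ∧
    -- every used two-item bundle has value equal to the optimal utility
    (∀ j k, 0 < yp j k →
        ((p k - 1) / (p k - p j)) * v j + (1 - (p k - 1) / (p k - p j)) * v k
          = ∑ i, v i * x i) ∧
    -- every valid bundle has value at most the optimal utility
    (∀ j, p j = 1 → v j ≤ ∑ i, v i * x i) ∧
    (∀ j k, p j < 1 → 1 < p k →
        ((p k - 1) / (p k - p j)) * v j + (1 - (p k - 1) / (p k - p j)) * v k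
          ≤ ∑ i, v i * x i) := by
  set u := ∑ i, v i * x i with hu
  -- singleton bundle bound
  have h3 : ∀ j, p j = 1 → v j ≤ u := by
    intro j hj
    have := hopt (fun i => if i = j then 1 else 0)
      (fun i => by positivity)
      (by simp)
      (by simp [mul_ite, hj])
    simpa [mul_ite] using this
  -- pair bundle bound
  have h4 : ∀ j k, p j < 1 → 1 < p k →
      ((p k - 1) / (p k - p j)) * v j + (1 - (p k - 1) / (p k - p j)) * v k ≤ u := by
    intro j k hj hk
    set α := (p k - 1) / (p k - p j) with hα
    have hd : 0 < p k - p j := by linarith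
    have hα0 : 0 ≤ α := div_nonneg (by linarith) hd.le
    have hα1 : α ≤ 1 := by
      rw [hα, div_le_one hd]; linarith
    have hjk : j ≠ k := by
      intro h; rw [h] at hj; linarith
    have hprice : α * p j + (1 - α) * p k = 1 := by
      rw [hα]; field_simp; ring
    have := hopt (fun i => (if i = j then α else 0) + (if i = k then (1 - α) else 0))
      (fun i => by have : (0:ℝ) ≤ 1 - α := by linarith
                   positivity)
      (by simp [Finset.sum_add_distrib, hjk])
      (by have h1 : ∑ i, p i * ((if i = j then α else 0) + (if i = k then (1 - α) else 0))
            = p j * α + p k * (1 - α) := by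
            simp [mul_add, Finset.sum_add_distrib, mul_ite, hjk]
          rw [h1]; nlinarith [hprice])
    simpa [mul_ite, mul_add, Finset.sum_add_distrib, hjk, mul_comm] using this
  -- identity : u as weighted average of bundle values
  have hid : u = (∑ j, ys j * v j)
      + ∑ j, ∑ k, yp j k *
        (((p k - 1) / (p k - p j)) * v j + (1 - (p k - 1) / (p k - p j)) * v k) := by
    have step : ∀ j, v j * x j = ys j * v j
        + (∑ k, ((p k - 1) / (p k - p j)) * yp j k * v j)
        + (∑ k, (1 - (p j - 1) / (p j - p k)) * yp k j * v j) := by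
      intro j
      rw [hdec j, mul_add, mul_add, Finset.mul_sum, Finset.mul_sum]
      congr 1
      congr 1
      · ring
      · exact Finset.sum_congr rfl fun k _ => by ring
      · exact Finset.sum_congr rfl fun k _ => by ring
    calc u = ∑ j, (ys j * v j
        + (∑ k, ((p k - 1) / (p k - p j)) * yp j k * v j)
        + (∑ k, (1 - (p j - 1) / (p j - p k)) * yp k j * v j)) := by
          rw [hu]; exact Finset.sum_congr rfl fun j _ => step j
      _ = (∑ j, ys j * v j)
        + (∑ j, ∑ k, ((p k - 1) / (p k - p j)) * yp j k * v j)
        + (∑ j, ∑ k, (1 - (p j - 1) / (p j - p k)) * yp k j * v j) := by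
          rw [Finset.sum_add_distrib, Finset.sum_add_distrib]
      _ = (∑ j, ys j * v j)
        + (∑ j, ∑ k, ((p k - 1) / (p k - p j)) * yp j k * v j)
        + (∑ j, ∑ k, (1 - (p k - 1) / (p k - p j)) * yp j k * v k) := by
          rw [Finset.sum_comm (f := fun j k => (1 - (p j - 1) / (p j - p k)) * yp k j * v j)]
      _ = _ := by
          rw [add_assoc, ← Finset.sum_add_distrib]
          congr 1
          refine Finset.sum_congr rfl fun j _ => ?_
          rw [← Finset.sum_add_distrib]
          exact Finset.sum_congr rfl fun k _ => by ring
  -- nonnegative slack sums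
  set val := fun j k => ((p k - 1) / (p k - p j)) * v j + (1 - (p k - 1) / (p k - p j)) * v k
    with hval
  have hS1nn : ∀ j ∈ Finset.univ, 0 ≤ ys j * (u - v j) := by
    intro j _
    rcases eq_or_ne (ys j) 0 with h | h
    · simp [h]
    · exact mul_nonneg (hys j) (by have := h3 j (hss j h); linarith)
  have hS2nn : ∀ j ∈ Finset.univ, 0 ≤ ∑ k, yp j k * (u - val j k) := by
    intro j _
    refine Finset.sum_nonneg fun k _ => ?_
    rcases eq_or_ne (yp j k) 0 with h | h
    · simp [h]
    · have hp' := hps j k h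
      exact mul_nonneg (hyp j k) (by have := h4 j k hp'.1 hp'.2; simp [hval]; linarith)
  have hzero : (∑ j, ys j * (u - v j)) + (∑ j, ∑ k, yp j k * (u - val j k)) = 0 := by
    have e1 : (∑ j, ys j * (u - v j)) = (∑ j, ys j) * u - ∑ j, ys j * v j := by
      rw [Finset.sum_mul, ← Finset.sum_sub_distrib]
      exact Finset.sum_congr rfl fun j _ => by ring
    have e2 : (∑ j, ∑ k, yp j k * (u - val j k))
        = (∑ j, ∑ k, yp j k) * u - ∑ j, ∑ k, yp j k * val j k := by
      rw [Finset.sum_mul, ← Finset.sum_sub_distrib]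
      refine Finset.sum_congr rfl fun j _ => ?_
      rw [Finset.sum_mul, ← Finset.sum_sub_distrib]
      exact Finset.sum_congr rfl fun k _ => by ring
    have e3 : (∑ j, ys j) * u + (∑ j, ∑ k, yp j k) * u = u := by
      rw [← add_mul, hw, one_mul]
    have e4 : (∑ j, ∑ k, yp j k * val j k)
        = ∑ j, ∑ k, yp j k *
          (((p k - 1) / (p k - p j)) * v j + (1 - (p k - 1) / (p k - p j)) * v k) := rfl
    rw [e1, e2, e4]
    linarith [hid]
  have hS1z : (∑ j, ys j * (u - v j)) = 0 := by
    have h1 := Finset.sum_nonneg hS1nn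
    have h2 := Finset.sum_nonneg hS2nn
    linarith
  have hS2z : (∑ j, ∑ k, yp j k * (u - val j k)) = 0 := by
    have h1 := Finset.sum_nonneg hS1nn
    have h2 := Finset.sum_nonneg hS2nn
    linarith
  refine ⟨?_, ?_, h3, h4⟩
  · intro j hj
    have := (Finset.sum_eq_zero_iff_of_nonneg hS1nn).mp hS1z j (Finset.mem_univ j)
    have h0 : u - v j = 0 := by
      rcases mul_eq_zero.mp this with h | h
      · exact absurd h (by linarith)
      · exact h
    linarith
  · intro j k hjk
    have hjz := (Finset.sum_eq_zero_iff_of_nonneg hS2nn).mp hS2z j (Finset.mem_univ j)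
    have hin : ∀ k ∈ Finset.univ, 0 ≤ yp j k * (u - val j k) := by
      intro k _
      rcases eq_or_ne (yp j k) 0 with h | h
      · simp [h]
      · have hp' := hps j k h
        exact mul_nonneg (hyp j k) (by have := h4 j k hp'.1 hp'.2; simp [hval]; linarith)
    have := (Finset.sum_eq_zero_iff_of_nonneg hin).mp hjz k (Finset.mem_univ k)
    have h0 : u - val j k = 0 := by
      rcases mul_eq_zero.mp this with h | h
      · exact absurd h (by linarith)
      · exact h
    have : val j k = u := by linarith
    simpa [hval] using this
end

section
/- Let an agent with values v have optimal equilibrium utility u. If b=(j,k) and b'=(j',k') are bundles with p_j, p_{j'} < 1 < p_k, p_{k'}, and both have price exactly 1 and value exactly u for the agent (i.e., both are optimum bundles), then the cross bundles b''=(j,k') and b'''=(j',k) (with their respective unique price-1 mixing ratios) also have value exactly u for the agent. -/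

private lemma stmt4_aux (a b va vb u αv : ℝ) (ha : a < 1) (hb : 1 < b)
    (hαv : αv = (b - 1) / (b - a)) :
    (αv * va + (1 - αv) * vb - u) * (b - a) = (b - 1) * (va - u) + (1 - a) * (vb - u) := by
  have hne : b - a ≠ 0 := by intro h; linarith
  subst hαv
  field_simp
  ring

set_option maxHeartbeats 1000000 in
/-- Exchange property of optimum bundles. A bundle `(j,k)` with `p j < 1 < p k` has mixing
ratio `α j k = (p k − 1)/(p k − p j)` and value `α·v j + (1−α)·v k`. If `(j,k)` and `(j',k')`
are optimum bundles (price exactly 1 under the mix and value exactly `u`), all price-1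
bundles have value at most `u`, and `v` straddles `u` on the items of two-item optimum
bundles, then the cross bundles `(j,k')` and `(j',k)` also have value exactly `u`. -/
theorem stmt_4 (m : ℕ) (p v : Fin m → ℝ) (u : ℝ)
    (j k j' k' : Fin m)
    (hpj : p j < 1) (hpj' : p j' < 1) (hpk : 1 < p k) (hpk' : 1 < p k')
    (α : Fin m → Fin m → ℝ)
    (hα : ∀ a b, p a < 1 → 1 < p b → α a b = (p b - 1) / (p b - p a))
    -- the two bundles are optimum: value exactly u
    (hb : α j k * v j + (1 - α j k) * v k = u)
    (hb' : α j' k' * v j' + (1 - α j' k') * v k' = u)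
    -- values straddle u on items of two-item optimum bundles
    (hvj : v j < u) (hvk : u < v k) (hvj' : v j' < u) (hvk' : u < v k')
    -- every price-1 bundle has value at most u
    (hmax : ∀ a b, p a < 1 → 1 < p b → α a b * v a + (1 - α a b) * v b ≤ u) :
    α j k' * v j + (1 - α j k') * v k' = u ∧
    α j' k * v j' + (1 - α j' k) * v k = u := by
  have d1 : (0:ℝ) < p k - p j := by linarith
  have d3 : (0:ℝ) < p k' - p j := by linarith
  have d4 : (0:ℝ) < p k - p j' := by linarith
  have h1 := stmt4_aux (p j) (p k) (v j) (v k) u _ hpj hpk (hα j k hpj hpk)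
  have h2 := stmt4_aux (p j') (p k') (v j') (v k') u _ hpj' hpk' (hα j' k' hpj' hpk')
  have g1 := stmt4_aux (p j) (p k') (v j) (v k') u _ hpj hpk' (hα j k' hpj hpk')
  have g2 := stmt4_aux (p j') (p k) (v j') (v k) u _ hpj' hpk (hα j' k hpj' hpk)
  have hbk : (p k - 1) * (v j - u) + (1 - p j) * (v k - u) = 0 := by
    linear_combination (p k - p j) * hb - h1
  have hbk' : (p k' - 1) * (v j' - u) + (1 - p j') * (v k' - u) = 0 := by
    linear_combination (p k' - p j') * hb' - h2
  have s1 : (p k' - 1) * (v j - u) + (1 - p j) * (v k' - u) ≤ 0 := by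
    have h := hmax j k' hpj hpk'
    nlinarith [g1]
  have s2 : (p k - 1) * (v j' - u) + (1 - p j') * (v k - u) ≤ 0 := by
    have h := hmax j' k hpj' hpk
    nlinarith [g2]
  have c1 : (0:ℝ) < (p k - 1) * (1 - p j') := by nlinarith
  have c2 : (0:ℝ) < (p k' - 1) * (1 - p j) := by nlinarith
  have key : (p k - 1) * (1 - p j') * ((p k' - 1) * (v j - u) + (1 - p j) * (v k' - u))
      + (p k' - 1) * (1 - p j) * ((p k - 1) * (v j' - u) + (1 - p j') * (v k - u)) = 0 := by
    linear_combination (p k' - 1) * (1 - p j') * hbk + (p k - 1) * (1 - p j) * hbk'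
  have hcA : 0 ≤ (p k - 1) * (1 - p j') * ((p k' - 1) * (v j - u) + (1 - p j) * (v k' - u)) := by
    nlinarith [mul_nonneg (le_of_lt c2) (neg_nonneg.mpr s2)]
  have hA0 : 0 ≤ (p k' - 1) * (v j - u) + (1 - p j) * (v k' - u) :=
    le_of_not_gt fun h => absurd hcA (not_le.mpr (mul_neg_of_pos_of_neg c1 h))
  have z1 : (p k' - 1) * (v j - u) + (1 - p j) * (v k' - u) = 0 := le_antisymm s1 hA0
  have z2 : (p k - 1) * (v j' - u) + (1 - p j') * (v k - u) = 0 := by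
    nlinarith [key, z1]
  constructor
  · have h := g1
    rw [z1] at h
    rcases mul_eq_zero.mp h with h | h
    · linarith
    · linarith
  · have h := g2
    rw [z2] at h
    rcases mul_eq_zero.mp h with h | h
    · linarith
    · linarith
end

section
/- In a market equilibrium where agent i has a unique most preferred item and equilibrium utility u_i, every candidate bundle of agent i has total price at least 1. Specifically: (a) if p_j < 1 for the singleton candidate bundle (j) with v_{ij} = u_i and j is not the unique argmax of v_i, then the allocation is not optimal (contradiction); (b) for a two-item candidate bundle b=(k,z) with mixing ratio α satisfying α v_{ik} + (1−α) v_{iz} = u_i, if α p_k + (1−α) p_z < 1 then the agent could mix in a positive amount of her strictly-better unique favorite item, achieving utility strictly greater than u_i within budget, contradicting optimality of u_i. -/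
/-- In a market equilibrium, if agent `i` has a unique most preferred item `j*`, then every
candidate bundle of agent `i` at her equilibrium utility `u_i` has total price at least 1:
(a) singleton candidate bundles `(j)` with `v i j = u_i` have `p j ≥ 1`;
(b) two-item candidate bundles `(k,z)` with `v i k < u_i < v i z`, mixed at the ratio `γ`
with `γ·v i k + (1−γ)·v i z = u_i`, have `γ·p k + (1−γ)·p z ≥ 1`. -/
theorem stmt_6 (n m : ℕ) (v : Fin n → Fin m → ℝ) (C : Fin m → ℝ)
    (p : Fin m → ℝ) (x : Fin n → Fin m → ℝ)
    (hp : ∀ j, 0 ≤ p j)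
    -- equilibrium: feasibility and optimality for every agent
    (hxnn : ∀ a j, 0 ≤ x a j)
    (hxsum : ∀ a, ∑ j, x a j = 1)
    (hxbudget : ∀ a, ∑ j, p j * x a j ≤ 1)
    (hopt : ∀ a (y : Fin m → ℝ), (∀ j, 0 ≤ y j) → (∑ j, y j = 1) →
        (∑ j, p j * y j ≤ 1) → ∑ j, v a j * y j ≤ ∑ j, v a j * x a j)
    -- market clearing: all items fully allocated
    (hclear : ∀ j, ∑ a, x a j = C j)
    -- agent i has a unique most preferred item j*
    (i : Fin n) (jstar : Fin m) (hfav : ∀ j, j ≠ jstar → v i j < v i jstar) :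
    -- u_i is agent i's equilibrium utility
    (∀ j, v i j = ∑ j', v i j' * x i j' → j ≠ jstar → 1 ≤ p j) ∧
    (∀ k z γ : _, ∀ _ : v i k < ∑ j', v i j' * x i j',
        (∑ j', v i j' * x i j') < v i z →
        0 < γ → γ < 1 →
        γ * v i k + (1 - γ) * v i z = ∑ j', v i j' * x i j' →
        1 ≤ γ * p k + (1 - γ) * p z) := by
  set u := ∑ j', v i j' * x i j' with hu
  have hkey : ∀ b : Fin m → ℝ, (∀ j, 0 ≤ b j) → (∑ j, b j) = 1 →
      (∑ j, v i j * b j) = u → u < v i jstar → 1 ≤ ∑ j, p j * b j := by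
    intro b hb hb1 hbv hlt
    by_contra h
    push_neg at h
    set ρ := ∑ j, p j * b j with hρ
    have hρ0 : 0 ≤ ρ := Finset.sum_nonneg fun j _ => mul_nonneg (hp j) (hb j)
    set M := max 1 (p jstar - ρ) with hM
    have hM0 : (0:ℝ) < M := lt_of_lt_of_le one_pos (le_max_left _ _)
    set ε := (1 - ρ) / M with hε
    have hε0 : 0 < ε := div_pos (by linarith) hM0
    have hε1 : ε ≤ 1 := by
      rw [div_le_one hM0]
      have h1 : (1:ℝ) ≤ M := le_max_left _ _
      linarith
    have hεp : ε * (p jstar - ρ) ≤ 1 - ρ := by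
      have h1 : ε * (p jstar - ρ) ≤ ε * M :=
        mul_le_mul_of_nonneg_left (le_max_right _ _) hε0.le
      have h2 : ε * M = 1 - ρ := by
        rw [hε, div_mul_cancel₀ _ hM0.ne']
      linarith
    set y : Fin m → ℝ := fun j => (1 - ε) * b j + ε * (if j = jstar then 1 else 0) with hy
    have hynn : ∀ j, 0 ≤ y j := by
      intro j
      apply add_nonneg (mul_nonneg (by linarith) (hb j))
      apply mul_nonneg hε0.le
      split <;> norm_num
    have hysum : ∑ j, y j = 1 := by
      simp only [hy, Finset.sum_add_distrib, ← Finset.mul_sum, hb1,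
        Finset.sum_ite_eq', Finset.mem_univ, if_true]
      ring
    have hyb : ∑ j, p j * y j ≤ 1 := by
      have hcalc : ∑ j, p j * y j = (1 - ε) * ρ + ε * p jstar := by
        simp only [hy, mul_add, Finset.sum_add_distrib, hρ]
        rw [show (∑ j, p j * ((1 - ε) * b j)) = (1 - ε) * ∑ j, p j * b j by
          rw [Finset.mul_sum]; apply Finset.sum_congr rfl; intros; ring]
        congr 1
        rw [show (∑ j, p j * (ε * if j = jstar then 1 else 0))
            = ∑ j, (if j = jstar then ε * p j else 0) by
          apply Finset.sum_congr rfl; intro j _; split <;> simp_all <;> ring]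
        rw [Finset.sum_ite_eq' Finset.univ jstar (fun j => ε * p j)]
        simp
      rw [hcalc]
      nlinarith [hεp]
    have hyv : ∑ j, v i j * y j = (1 - ε) * u + ε * v i jstar := by
      simp only [hy, mul_add, Finset.sum_add_distrib]
      rw [show (∑ j, v i j * ((1 - ε) * b j)) = (1 - ε) * ∑ j, v i j * b j by
        rw [Finset.mul_sum]; apply Finset.sum_congr rfl; intros; ring]
      rw [hbv]
      congr 1
      rw [show (∑ j, v i j * (ε * if j = jstar then 1 else 0))
          = ∑ j, (if j = jstar then ε * v i j else 0) by
        apply Finset.sum_congr rfl; intro j _; split <;> simp_all <;> ring]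
      rw [Finset.sum_ite_eq' Finset.univ jstar (fun j => ε * v i j)]
      simp
    have hle := hopt i y hynn hysum hyb
    rw [hyv, ← hu] at hle
    nlinarith [mul_pos hε0 (sub_pos.mpr hlt)]
  constructor
  · intro j hj hjne
    have hb : ∀ j', (0:ℝ) ≤ (if j' = j then (1:ℝ) else 0) := by
      intro j'; split <;> norm_num
    have hb1 : (∑ j', (if j' = j then (1:ℝ) else 0)) = 1 := by
      rw [Finset.sum_ite_eq' Finset.univ j (fun _ => (1:ℝ))]; simp
    have hbv : (∑ j', v i j' * (if j' = j then (1:ℝ) else 0)) = u := by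
      rw [show (∑ j', v i j' * (if j' = j then (1:ℝ) else 0))
          = ∑ j', (if j' = j then v i j' else 0) by
        apply Finset.sum_congr rfl; intro j' _; split <;> simp]
      rw [Finset.sum_ite_eq' Finset.univ j (fun j' => v i j')]
      simp [← hj]
    have hlt : u < v i jstar := by rw [← hj]; exact hfav j hjne
    have := hkey _ hb hb1 hbv hlt
    rwa [show (∑ j', p j' * (if j' = j then (1:ℝ) else 0))
        = ∑ j', (if j' = j then p j' else 0) by
        apply Finset.sum_congr rfl; intro j' _; split <;> simp,
      Finset.sum_ite_eq' Finset.univ j (fun j' => p j'), if_pos (Finset.mem_univ j)] at this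
  · intro k z γ hk hz hγ0 hγ1 hsum
    set b : Fin m → ℝ := fun j => γ * (if j = k then 1 else 0)
        + (1 - γ) * (if j = z then 1 else 0) with hbdef
    have hb : ∀ j, 0 ≤ b j := by
      intro j
      apply add_nonneg <;> apply mul_nonneg <;> first
        | linarith | (split <;> norm_num)
    have hsum2 : ∀ c : Fin m → ℝ, (∑ j, c j * b j) = γ * c k + (1 - γ) * c z := by
      intro c
      simp only [hbdef, mul_add, Finset.sum_add_distrib]
      congr 1
      · rw [show (∑ j, c j * (γ * if j = k then 1 else 0))
            = ∑ j, (if j = k then γ * c j else 0) by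
          apply Finset.sum_congr rfl; intro j _; split <;> simp_all <;> ring]
        rw [Finset.sum_ite_eq' Finset.univ k (fun j => γ * c j)]
        simp
      · rw [show (∑ j, c j * ((1 - γ) * if j = z then 1 else 0))
            = ∑ j, (if j = z then (1 - γ) * c j else 0) by
          apply Finset.sum_congr rfl; intro j _; split <;> simp_all <;> ring]
        rw [Finset.sum_ite_eq' Finset.univ z (fun j => (1 - γ) * c j)]
        simp
    have hb1 : (∑ j, b j) = 1 := by
      have := hsum2 (fun _ => 1)
      simpa using this.trans (by ring)
    have hbv : (∑ j, v i j * b j) = u := by rw [hsum2 (v i)]; exact hsum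
    have hlt : u < v i jstar := by
      by_cases hzj : z = jstar
      · rwa [← hzj]
      · exact hz.trans (hfav z hzj)
    have := hkey b hb hb1 hbv hlt
    rwa [hsum2 p] at this
end

section
/- In any equilibrium of the (n+1)-player game where the market-maker chooses prices p ≥ 0 with ∑_j C_j p_j ≤ n to maximize ∑_j (∑_i x_{ij} − C_j) p_j, and each agent i chooses x_i ≥ 0 with ∑_j x_{ij} ≤ 1 and ∑_j p_j x_{ij} ≤ 1 to maximize ∑_j v_{ij} x_{ij}: (a) no item is over-allocated, i.e., ∑_i x_{ij} ≤ C_j for all j, and (b) every under-allocated item has price 0, i.e., ∑_i x_{ij} < C_j implies p_j = 0. -/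
/-- In any equilibrium of the (n+1)-player game where the market maker chooses prices
`p ≥ 0` with `∑ C_j p_j ≤ n` to maximize `∑_j (∑_i x_{ij} − C_j) p_j` and each agent
chooses a feasible optimal bundle, (a) no item is over-allocated, and (b) every
under-allocated item has price 0. -/
theorem stmt_15 (n m : ℕ) (v : Fin n → Fin m → ℝ) (C : Fin m → ℝ)
    (hC : ∀ j, 0 < C j) (hCsum : ∑ j, C j = (n : ℝ))
    (p : Fin m → ℝ) (x : Fin n → Fin m → ℝ)
    -- the market maker's action is feasible
    (hp : ∀ j, 0 ≤ p j) (hpbud : ∑ j, C j * p j ≤ (n : ℝ))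
    -- the market maker's action is optimal
    (hpopt : ∀ q : Fin m → ℝ, (∀ j, 0 ≤ q j) → (∑ j, C j * q j ≤ (n : ℝ)) →
      ∑ j, ((∑ i, x i j) - C j) * q j ≤ ∑ j, ((∑ i, x i j) - C j) * p j)
    -- each agent's action is feasible
    (hxnn : ∀ i j, 0 ≤ x i j) (hxsum : ∀ i, ∑ j, x i j ≤ 1)
    (hxbud : ∀ i, ∑ j, p j * x i j ≤ 1)
    -- each agent's action is optimal
    (hxopt : ∀ i (y : Fin m → ℝ), (∀ j, 0 ≤ y j) → (∑ j, y j ≤ 1) →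
      (∑ j, p j * y j ≤ 1) → ∑ j, v i j * y j ≤ ∑ j, v i j * x i j) :
    (∀ j, ∑ i, x i j ≤ C j) ∧ (∀ j, (∑ i, x i j) < C j → p j = 0) := by
  set S : Fin m → ℝ := fun j => ∑ i, x i j with hSdef
  -- Part (b): under-allocated items have price 0
  have hb : ∀ j, S j < C j → p j = 0 := by
    intro j hj
    by_contra hpj
    have hpj' : 0 < p j := lt_of_le_of_ne (hp j) (Ne.symm hpj)
    set q : Fin m → ℝ := fun k => if k = j then 0 else p k with hq
    have key : ∀ g : Fin m → ℝ, ∑ k, g k * q k = (∑ k, g k * p k) - g j * p j := by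
      intro g
      have h1 : ∀ k : Fin m, g k * q k = g k * p k - (if k = j then g j * p j else 0) := by
        intro k
        simp only [hq]
        by_cases h : k = j
        · subst h; simp
        · simp [h]
      rw [Finset.sum_congr rfl (fun k _ => h1 k), Finset.sum_sub_distrib]
      simp
    have hq0 : ∀ k, 0 ≤ q k := by
      intro k; simp only [hq]; split
      · exact le_rfl
      · exact hp k
    have hqbud : ∑ k, C k * q k ≤ (n : ℝ) := by
      rw [key]
      have : 0 ≤ C j * p j := mul_nonneg (hC j).le (hp j)
      linarith
    have := hpopt q hq0 hqbud
    rw [key] at this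
    have hneg : (S j - C j) * p j < 0 :=
      mul_neg_of_neg_of_pos (by linarith) hpj'
    simp only [hSdef] at this hneg
    linarith
  have hb' : ∀ j, (∑ i, x i j) < C j → p j = 0 := hb
  -- Part (a): no over-allocation
  have ha : ∀ j, S j ≤ C j := by
    by_contra h
    push_neg at h
    obtain ⟨j0, hj0⟩ := h
    have hS0 : 0 < S j0 := (hC j0).trans hj0
    have hn : 0 < (n : ℝ) := by
      rcases Nat.eq_zero_or_pos n with h0 | h0
      · subst h0
        simp only [hSdef] at hS0
        simp at hS0
      · exact_mod_cast h0
    -- V > 0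
    set V : ℝ := ∑ k, (S k - C k) * p k with hV
    have hVpos : 0 < V := by
      set q : Fin m → ℝ := fun k => if k = j0 then (n : ℝ) / C j0 else 0 with hq
      have hq0 : ∀ k, 0 ≤ q k := by
        intro k; simp only [hq]; split
        · exact div_nonneg hn.le (hC j0).le
        · exact le_rfl
      have keyq : ∀ g : Fin m → ℝ, ∑ k, g k * q k = g j0 * ((n : ℝ) / C j0) := by
        intro g
        have h1 : ∀ k : Fin m, g k * q k =
            if k = j0 then g j0 * ((n : ℝ) / C j0) else 0 := by
          intro k; simp only [hq]
          by_cases h : k = j0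
          · subst h; simp
          · simp [h]
        rw [Finset.sum_congr rfl (fun k _ => h1 k)]
        simp
      have hqbud : ∑ k, C k * q k ≤ (n : ℝ) := by
        rw [keyq]
        rw [mul_div_cancel₀ _ (hC j0).ne']
      have hobj : 0 < ∑ k, (S k - C k) * q k := by
        rw [keyq]
        exact mul_pos (by linarith) (div_pos hn (hC j0))
      have := hpopt q hq0 hqbud
      simp only [hSdef, hV] at this hobj ⊢
      linarith
    -- T = ∑ C p equals n
    set T : ℝ := ∑ k, C k * p k with hT
    have hTnn : 0 ≤ T := Finset.sum_nonneg fun k _ => mul_nonneg (hC k).le (hp k)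
    have hTpos : 0 < T := by
      rcases lt_or_eq_of_le hTnn with h0 | h0
      · exact h0
      · exfalso
        have hall : ∀ k ∈ Finset.univ, C k * p k = 0 :=
          (Finset.sum_eq_zero_iff_of_nonneg
            (fun k _ => mul_nonneg (hC k).le (hp k))).mp h0.symm
        have hp0 : ∀ k, p k = 0 := by
          intro k
          have := hall k (Finset.mem_univ k)
          rcases mul_eq_zero.mp this with h | h
          · exact absurd h (hC k).ne'
          · exact h
        have : V = 0 := by
          simp only [hV]
          exact Finset.sum_eq_zero fun k _ => by rw [hp0 k, mul_zero]
        linarith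
    have hTn : T = (n : ℝ) := by
      set c : ℝ := (n : ℝ) / T with hc
      have hc0 : 0 ≤ c := div_nonneg hn.le hTpos.le
      set q : Fin m → ℝ := fun k => c * p k with hq
      have hq0 : ∀ k, 0 ≤ q k := fun k => mul_nonneg hc0 (hp k)
      have hqbud : ∑ k, C k * q k ≤ (n : ℝ) := by
        have : ∑ k, C k * q k = c * T := by
          simp only [hq, hT, Finset.mul_sum]
          exact Finset.sum_congr rfl fun k _ => by ring
        rw [this, hc, div_mul_cancel₀ _ hTpos.ne']
      have hopt := hpopt q hq0 hqbud
      have hobj : ∑ k, (S k - C k) * q k = c * V := by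
        simp only [hq, hV, Finset.mul_sum]
        exact Finset.sum_congr rfl fun k _ => by ring
      rw [show (∑ k, ((∑ i, x i k) - C k) * (q k)) = ∑ k, (S k - C k) * q k from rfl] at hopt
      rw [hobj] at hopt
      have hc1 : c ≤ 1 := by
        by_contra hcgt
        push_neg at hcgt
        nlinarith
      have : (n : ℝ) ≤ T := by
        rw [hc] at hc1
        have := (div_le_one hTpos).mp hc1
        linarith
      have hTle : T ≤ (n : ℝ) := by simpa [hT] using hpbud
      linarith
    -- total spending exceeds n: contradiction
    have hSp : ∑ k, S k * p k = V + T := by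
      simp only [hV, hT, ← Finset.sum_add_distrib]
      exact Finset.sum_congr rfl fun k _ => by ring
    have hspend : ∑ k, S k * p k ≤ (n : ℝ) := by
      have hswap : ∑ k, S k * p k = ∑ i, ∑ k, p k * x i k := by
        simp only [hSdef, Finset.sum_mul]
        rw [Finset.sum_comm]
        exact Finset.sum_congr rfl fun i _ => Finset.sum_congr rfl fun k _ => by ring
      rw [hswap]
      calc ∑ i, ∑ k, p k * x i k ≤ ∑ _i : Fin n, (1 : ℝ) :=
            Finset.sum_le_sum fun i _ => hxbud i
        _ = (n : ℝ) := by simp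
    rw [hSp, hTn] at hspend
    linarith
  exact ⟨ha, hb'⟩
end

section
/- In the best-response closed-graph argument: let h be continuous and convex in its first argument, let (x^t, y^t) → (x*, y*) with h(x^t, y^t_{-i}) ≤ 0 for all t, let x† satisfy h(x†, y*_{-i}) ≤ 0, and let x^0 satisfy h(x^0, y) ≤ −δ^0 < 0 for all y. Define δ^t = max(0, h(x†, y^t_{-i})), λ^t = δ^0/(δ^0 + δ^t), and x'^t = λ^t x† + (1−λ^t) x^0. Then h(x'^t, y^t_{-i}) ≤ 0 for all t, and x'^t → x† as t → ∞. -/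
/-- The feasible-approximant construction in the closed-graph argument: with `h`
jointly continuous and convex in its first argument on a convex set `X`, a sequence
`(x^t, y^t) → (x*, y*)`, a target `x†` feasible against `y*`, and a Slater point `x⁰`
with `h(x⁰, y) ≤ −δ⁰ < 0` uniformly, the points
`x'^t = λ^t x† + (1−λ^t) x⁰` with `δ^t = max(0, h(x†, y^t))` and
`λ^t = δ⁰/(δ⁰ + δ^t)` satisfy `h(x'^t, y^t) ≤ 0` for all `t` and `x'^t → x†`. -/
theorem stmt_17 (dim : ℕ) (Y : Type*) [TopologicalSpace Y]
    (X : Set (EuclideanSpace ℝ (Fin dim)))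
    (hX : Convex ℝ X)
    (h : EuclideanSpace ℝ (Fin dim) → Y → ℝ)
    (hcont : Continuous fun q : EuclideanSpace ℝ (Fin dim) × Y => h q.1 q.2)
    (hconv : ∀ y : Y, ConvexOn ℝ X (fun z => h z y))
    (xt : ℕ → EuclideanSpace ℝ (Fin dim)) (yt : ℕ → Y)
    (xstar : EuclideanSpace ℝ (Fin dim)) (ystar : Y)
    (hxmem : ∀ t, xt t ∈ X)
    (hlim : Filter.Tendsto (fun t => (xt t, yt t)) Filter.atTop (nhds (xstar, ystar)))
    (hfeas : ∀ t, h (xt t) (yt t) ≤ 0)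
    (xdag : EuclideanSpace ℝ (Fin dim)) (hxdagmem : xdag ∈ X)
    (hxdag : h xdag ystar ≤ 0)
    (x0 : EuclideanSpace ℝ (Fin dim)) (hx0mem : x0 ∈ X)
    (δ0 : ℝ) (hδ0 : 0 < δ0)
    (hx0 : ∀ y : Y, h x0 y ≤ -δ0)
    (δ : ℕ → ℝ) (hδ : ∀ t, δ t = max 0 (h xdag (yt t)))
    (lam : ℕ → ℝ) (hlam : ∀ t, lam t = δ0 / (δ0 + δ t))
    (x' : ℕ → EuclideanSpace ℝ (Fin dim))
    (hx' : ∀ t, x' t = lam t • xdag + (1 - lam t) • x0) :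
    (∀ t, h (x' t) (yt t) ≤ 0) ∧
    Filter.Tendsto x' Filter.atTop (nhds xdag) := by

  have hδnn : ∀ t, 0 ≤ δ t := fun t => (hδ t) ▸ le_max_left 0 _
  have hden : ∀ t, 0 < δ0 + δ t := fun t => by linarith [hδnn t]
  have hlampos : ∀ t, 0 < lam t := fun t => by
    rw [hlam t]; exact div_pos hδ0 (hden t)
  have hlamle : ∀ t, lam t ≤ 1 := fun t => by
    rw [hlam t]; exact div_le_one_of_le₀ (by linarith [hδnn t]) (hden t).le
  constructor
  · intro t
    have hcv := (hconv (yt t)).2 hxdagmem hx0mem (hlampos t).le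
      (show (0:ℝ) ≤ 1 - lam t by linarith [hlamle t]) (by ring)
    rw [← hx' t] at hcv
    have h1 : h xdag (yt t) ≤ δ t := (hδ t) ▸ le_max_right 0 _
    have h2 : h x0 (yt t) ≤ -δ0 := hx0 (yt t)
    have key : lam t * δ t + (1 - lam t) * (-δ0) = 0 := by
      have hne := (hden t).ne'; rw [hlam t]; field_simp; ring
    have := mul_le_mul_of_nonneg_left h1 (hlampos t).le
    have := mul_le_mul_of_nonneg_left h2 (by linarith [hlamle t] : 0 ≤ 1 - lam t)
    simp only [smul_eq_mul] at hcv
    linarith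
  · have hyt : Filter.Tendsto yt Filter.atTop (nhds ystar) :=
      (continuous_snd.tendsto _).comp hlim
    have hcy : Continuous (fun y : Y => h xdag y) :=
      hcont.comp (continuous_const.prodMk continuous_id)
    have hh : Filter.Tendsto (fun t => h xdag (yt t)) Filter.atTop (nhds (h xdag ystar)) :=
      (hcy.tendsto _).comp hyt
    have hδt : Filter.Tendsto δ Filter.atTop (nhds 0) := by
      have : Filter.Tendsto (fun t => max 0 (h xdag (yt t))) Filter.atTop
          (nhds (max 0 (h xdag ystar))) := tendsto_const_nhds.max hh
      rw [max_eq_left hxdag] at this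
      simpa only [← hδ] using this
    have hlamt : Filter.Tendsto lam Filter.atTop (nhds 1) := by
      have : Filter.Tendsto (fun t => δ0 / (δ0 + δ t)) Filter.atTop
          (nhds (δ0 / (δ0 + 0))) :=
        tendsto_const_nhds.div (tendsto_const_nhds.add hδt) (by linarith)
      rw [add_zero, div_self hδ0.ne'] at this
      simpa only [← hlam] using this
    have : Filter.Tendsto (fun t => lam t • xdag + (1 - lam t) • x0) Filter.atTop
        (nhds ((1:ℝ) • xdag + (1 - (1:ℝ)) • x0)) :=
      (hlamt.smul_const xdag).add ((tendsto_const_nhds.sub hlamt).smul_const x0)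
    simp only [one_smul, sub_self, zero_smul, add_zero] at this
    exact (funext hx' : x' = _) ▸ this
end
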